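/- Let R₁ = (M₁, α₁) and R₂ = (M₂, α₂) be complete deterministic Rabin acceptors over the same finite alphabet with finite state sets. Then ⟦R₁⟧ ⊆ ⟦R₂⟧ if and only if for every reachable SCC C of the product automaton M₁ × M₂, if π₁(C) satisfies α₁ then π₂(C) satisfies α₂. Moreover, if ⟦R₁⟧ is not a subset of ⟦R₂⟧, then there exist u ∈ Σ* and v ∈ Σ⁺ such that the ultimately periodic ω-word u(v)^ω is in ⟦R₁⟧ \ ⟦R₂⟧. -/

import Mathlib

open Filter

/-- Extended transition function: `dstar δ q x` is the state reached from `q` reading `x`. -/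
def dstar {Q A : Type*} (δ : Q → A → Q) (q : Q) (x : List A) : Q := x.foldl δ q

/-- The run of a deterministic automaton on an ω-word from state `q`. -/
def run {Q A : Type*} (δ : Q → A → Q) (q : Q) (w : ℕ → A) : ℕ → Q
  | 0 => q
  | n + 1 => δ (run δ q w n) (w n)

/-- The set of states visited infinitely often by the run on `w` from `q`. -/
def infOcc {Q A : Type*} (δ : Q → A → Q) (q : Q) (w : ℕ → A) : Set Q :=
  {p | ∃ᶠ n in atTop, run δ q w n = p}

/-- `C` is a strongly connected component of the automaton with transitions `δ`. -/
def IsSCC {Q A : Type*} (δ : Q → A → Q) (C : Set Q) : Prop :=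
  C.Nonempty ∧ ∀ q₁ ∈ C, ∀ q₂ ∈ C, ∃ x : List A, x ≠ [] ∧ dstar δ q₁ x = q₂ ∧
    ∀ x', x' <+: x → dstar δ q₁ x' ∈ C

/-- `q` is reachable from the initial state `qι`. -/
def Reachable {Q A : Type*} (δ : Q → A → Q) (qι q : Q) : Prop :=
  ∃ x : List A, dstar δ qι x = q

/-- The ultimately periodic ω-word `u(v)^ω`. -/
def upWord {A : Type*} (u v : List A) (hv : v ≠ []) : ℕ → A := fun n =>
  if h : n < u.length then u[n]
  else v[(n - u.length) % v.length]'(Nat.mod_lt _ (List.length_pos_iff.mpr hv))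

/-- The transition function of the product automaton. -/
def prodStep {Q₁ Q₂ A : Type*} (δ₁ : Q₁ → A → Q₁) (δ₂ : Q₂ → A → Q₂) :
    Q₁ × Q₂ → A → Q₁ × Q₂ := fun p a => (δ₁ p.1 a, δ₂ p.2 a)

/-- The ω-word `x·z` obtained by prepending the finite word `x` to `z`. -/
def prepend {A : Type*} (x : List A) (z : ℕ → A) : ℕ → A := fun n =>
  if h : n < x.length then x[n] else z (n - x.length)

/-- A set `S` of states satisfies a Rabin condition `α`. -/
def rabinSat {Q : Type*} (α : Set (Set Q × Set Q)) (S : Set Q) : Prop :=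
  ∃ p ∈ α, (S ∩ p.1).Nonempty ∧ S ∩ p.2 = ∅

/-!
The states a run visits infinitely often always form a reachable SCC of the automaton, and
conversely every reachable SCC `C` is exactly that set for some ultimately periodic word: reach
`C` with `u`, then repeat forever a cycle `v` through `C` that visits each of its states. For the
product automaton, the projections of this set are the corresponding sets of the two factors,
so inclusion of the accepted languages is decided SCC by SCC on `M₁ × M₂`, and a violating SCC
yields an ultimately periodic counterexample.
-/

open Function Set

section Frequently

variable {ι β γ : Type*}

lemma eventually_mem_setOf_frequently [Finite β] (l : Filter ι) (r : ι → β) :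
    ∀ᶠ n in l, r n ∈ {b | ∃ᶠ m in l, r m = b} := by
  have h : ∀ᶠ n in l, ∀ b, ¬(∃ᶠ m in l, r m = b) → r n ≠ b :=
    eventually_all.2 fun b => eventually_imp_distrib_left.2 not_frequently.1
  exact h.mono fun n hn => not_not.1 fun hr => hn (r n) hr rfl

lemma image_setOf_frequently [Finite β] (l : Filter ι) (r : ι → β) (f : β → γ) :
    f '' {b | ∃ᶠ n in l, r n = b} = {c | ∃ᶠ n in l, f (r n) = c} := by
  ext c
  constructor
  · rintro ⟨b, hb, rfl⟩
    exact hb.mono fun _ hn => congrArg f hn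
  · intro hc
    obtain ⟨b, hb⟩ := (frequently_exists (p := fun b n => r n = b ∧ f b = c)).1
      (hc.mono fun n hn => ⟨r n, rfl, hn⟩)
    exact ⟨b, hb.mono fun _ h => h.1, hb.exists.elim fun _ h => h.2⟩

lemma Function.Periodic.setOf_frequently_atTop_eq_range {r : ℕ → β} {c : ℕ}
    (hr : Periodic r c) (hc : 0 < c) :
    {b | ∃ᶠ n in atTop, r n = b} = range r := by
  ext b
  refine ⟨fun hb => hb.exists, ?_⟩
  rintro ⟨m, rfl⟩
  exact frequently_atTop.2 fun N => ⟨m + N * c, by nlinarith, hr.nat_mul N m⟩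

end Frequently

section Runs

variable {Q A : Type*} (δ : Q → A → Q)

lemma dstar_append (q : Q) (x y : List A) :
    dstar δ q (x ++ y) = dstar δ (dstar δ q x) y :=
  List.foldl_append ..

lemma run_eq_dstar (q : Q) (w : ℕ → A) :
    ∀ n, run δ q w n = dstar δ q (List.ofFn fun i : Fin n => w i)
  | 0 => rfl
  | n + 1 => by
    rw [run, run_eq_dstar q w n, List.ofFn_succ', List.concat_eq_append, dstar_append]
    rfl

lemma run_add (q : Q) (w : ℕ → A) (n : ℕ) :
    ∀ k, run δ q w (n + k) = run δ (run δ q w n) (fun i => w (n + i)) k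
  | 0 => rfl
  | k + 1 => by rw [← Nat.add_assoc, run, run, run_add q w n k]

lemma infOcc_eq_infOcc_run (q : Q) (w : ℕ → A) (n : ℕ) :
    infOcc δ q w = infOcc δ (run δ q w n) (fun i => w (n + i)) := by
  ext p
  have h := frequently_map (m := fun k => k + n) (f := atTop) (P := fun k => run δ q w k = p)
  rw [map_add_atTop_eq_nat] at h
  exact h.trans (by simp only [Nat.add_comm _ n, run_add]; rfl)

lemma reachable_of_mem_infOcc {q p : Q} {w : ℕ → A} (hp : p ∈ infOcc δ q w) :
    Reachable δ q p :=
  hp.exists.elim fun n hn => ⟨_, (run_eq_dstar δ q w n).symm.trans hn⟩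

lemma isSCC_infOcc [Finite Q] (q : Q) (w : ℕ → A) : IsSCC δ (infOcc δ q w) := by
  -- From time `N` on the run stays in `infOcc`, so any stretch of it after `N` is a path there.
  obtain ⟨N, hN⟩ := eventually_atTop.1 (eventually_mem_setOf_frequently atTop (run δ q w))
  refine ⟨⟨run δ q w N, hN N le_rfl⟩, fun p₁ h₁ p₂ h₂ => ?_⟩
  obtain ⟨n, hnN, hn⟩ := frequently_atTop.1 h₁ N
  obtain ⟨m, hnm, hm⟩ := frequently_atTop.1 h₂ (n + 1)
  have hsegment :
      ∀ k, dstar δ p₁ (List.ofFn fun i : Fin k => w (n + i)) = run δ q w (n + k) := fun k => by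
    rw [run_add, run_eq_dstar, hn]
  refine ⟨List.ofFn fun i : Fin (m - n) => w (n + i),
    by simp only [ne_eq, List.ofFn_eq_nil_iff]; omega,
    by rw [hsegment, Nat.add_sub_cancel' (by omega), hm], fun x hx => ?_⟩
  have hlen : x.length ≤ m - n := by simpa using hx.length_le
  have hx_eq : x = List.ofFn fun i : Fin x.length => w (n + i) :=
    List.ext_getElem (by simp) fun i h _ => by simp [hx.getElem h]
  rw [hx_eq, hsegment]
  exact hN _ (by omega)

end Runs

section Cycles

variable {Q A : Type*} (δ : Q → A → Q)

def visited (p : Q) (x : List A) : Set Q :=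
  {q | ∃ y, y <+: x ∧ dstar δ p y = q}

variable {δ}

lemma start_mem_visited (p : Q) (x : List A) : p ∈ visited δ p x :=
  ⟨[], List.nil_prefix, rfl⟩

lemma visited_subset_iff {p : Q} {x : List A} {C : Set Q} :
    visited δ p x ⊆ C ↔ ∀ y, y <+: x → dstar δ p y ∈ C := by
  simp [visited, subset_def]

lemma visited_append (p : Q) (x y : List A) :
    visited δ p (x ++ y) = visited δ p x ∪ visited δ (dstar δ p x) y := by
  ext q
  constructor
  · rintro ⟨z, hz, rfl⟩
    by_cases hlen : z.length ≤ x.length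
    · exact Or.inl ⟨z, List.prefix_of_prefix_length_le hz (x.prefix_append y) hlen, rfl⟩
    · obtain ⟨t, rfl⟩ :=
        List.prefix_of_prefix_length_le (x.prefix_append y) hz (le_of_not_ge hlen)
      exact Or.inr ⟨t, (List.prefix_append_right_inj x).1 hz, (dstar_append δ p x t).symm⟩
  · rintro (⟨z, hz, rfl⟩ | ⟨t, ht, rfl⟩)
    · exact ⟨z, hz.trans (x.prefix_append y), rfl⟩
    · exact ⟨x ++ t, (List.prefix_append_right_inj x).2 ht, dstar_append δ p x t⟩

lemma IsSCC.exists_cycle_visited_eq [Finite Q] {C : Set Q} (hC : IsSCC δ C) {p : Q}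
    (hp : p ∈ C) : ∃ v : List A, v ≠ [] ∧ dstar δ p v = p ∧ visited δ p v = C := by
  refine (C.toFinite.induction_on_subset (motive := fun S _ => ∃ v : List A, v ≠ [] ∧
      dstar δ p v = p ∧ visited δ p v ⊆ C ∧ S ⊆ visited δ p v) C ?_ ?_).imp
    fun v ⟨hv, hloop, hvC, hCv⟩ => ⟨hv, hloop, hvC.antisymm hCv⟩
  · obtain ⟨v, hv, hloop, hvC⟩ := hC.2 p hp p hp
    exact ⟨v, hv, hloop, visited_subset_iff.2 hvC, empty_subset _⟩
  · rintro a S ha - - ⟨v, hv, hloop, hvC, hSv⟩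
    obtain ⟨x, -, hx, hxC⟩ := hC.2 p hp a ha
    obtain ⟨y, -, hy, hyC⟩ := hC.2 a ha p hp
    refine ⟨v ++ x ++ y, by simp [hv], by simp only [dstar_append, hloop, hx, hy], ?_, ?_⟩
    all_goals simp only [visited_append, dstar_append, hloop, hx]
    · exact union_subset (union_subset hvC (visited_subset_iff.2 hxC)) (visited_subset_iff.2 hyC)
    · exact insert_subset (Or.inr (start_mem_visited a y))
        (hSv.trans (subset_union_left.trans subset_union_left))

end Cycles

section UltimatelyPeriodic

variable {Q A : Type*} (δ : Q → A → Q) (v : List A) (hv : v ≠ [])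

lemma upWord_length_add (u : List A) (n : ℕ) :
    upWord u v hv (u.length + n) = upWord [] v hv n := by
  simp [upWord]

lemma periodic_upWord_nil : Periodic (upWord [] v hv) v.length := fun n => by
  simp [upWord]

lemma ofFn_upWord (u : List A) : (List.ofFn fun i : Fin u.length => upWord u v hv i) = u :=
  List.ext_getElem (by simp) fun i _ _ => by simp [upWord]

lemma ofFn_upWord_nil {n : ℕ} (hn : n ≤ v.length) :
    (List.ofFn fun i : Fin n => upWord [] v hv i) = v.take n :=
  List.ext_getElem (by simp [hn]) fun i h _ => by
    simp only [List.length_ofFn] at h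
    simp [upWord, Nat.mod_eq_of_lt (h.trans_le hn)]

lemma run_upWord_nil {n : ℕ} (hn : n ≤ v.length) (p : Q) :
    run δ p (upWord [] v hv) n = dstar δ p (v.take n) := by
  rw [run_eq_dstar, ofFn_upWord_nil v hv hn]

variable {δ}

lemma periodic_run_upWord_nil {p : Q} (hloop : dstar δ p v = p) :
    Periodic (run δ p (upWord [] v hv)) v.length := fun n => by
  have hperiod : run δ p (upWord [] v hv) v.length = p := by
    rw [run_upWord_nil δ v hv le_rfl, List.take_length, hloop]
  rw [Nat.add_comm, run_add, hperiod]
  simp only [Nat.add_comm v.length, periodic_upWord_nil v hv _]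

lemma range_run_upWord_nil {p : Q} (hloop : dstar δ p v = p) :
    range (run δ p (upWord [] v hv)) = visited δ p v := by
  ext q
  constructor
  · rintro ⟨n, rfl⟩
    rw [← (periodic_run_upWord_nil v hv hloop).map_mod_nat,
      run_upWord_nil δ v hv (Nat.mod_lt _ (List.length_pos_iff.2 hv)).le]
    exact ⟨_, List.take_prefix _ v, rfl⟩
  · rintro ⟨y, hy, rfl⟩
    rw [List.prefix_iff_eq_take.1 hy, ← run_upWord_nil δ v hv hy.length_le]
    exact mem_range_self _

lemma infOcc_upWord {q : Q} (u : List A) (hloop : dstar δ (dstar δ q u) v = dstar δ q u) :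
    infOcc δ q (upWord u v hv) = visited δ (dstar δ q u) v := by
  have hu : run δ q (upWord u v hv) u.length = dstar δ q u := by
    rw [run_eq_dstar, ofFn_upWord]
  rw [infOcc_eq_infOcc_run δ q _ u.length, hu]
  simp only [upWord_length_add]
  exact ((periodic_run_upWord_nil v hv hloop).setOf_frequently_atTop_eq_range
    (List.length_pos_iff.2 hv)).trans (range_run_upWord_nil v hv hloop)

end UltimatelyPeriodic

lemma IsSCC.exists_infOcc_upWord_eq {Q A : Type*} [Finite Q] {δ : Q → A → Q} {C : Set Q}
    (hC : IsSCC δ C) {q : Q} (hreach : ∀ p ∈ C, Reachable δ q p) :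
    ∃ (u v : List A) (hv : v ≠ []), infOcc δ q (upWord u v hv) = C := by
  obtain ⟨p, hp⟩ := hC.1
  obtain ⟨u, rfl⟩ := hreach p hp
  obtain ⟨v, hv, hloop, hvisited⟩ := hC.exists_cycle_visited_eq hp
  exact ⟨u, v, hv, (infOcc_upWord v hv u hloop).trans hvisited⟩

section Product

variable {Q₁ Q₂ A : Type*} (δ₁ : Q₁ → A → Q₁) (δ₂ : Q₂ → A → Q₂)
  (a : Q₁) (b : Q₂) (w : ℕ → A)

lemma run_prodStep :
    ∀ n, run (prodStep δ₁ δ₂) (a, b) w n = (run δ₁ a w n, run δ₂ b w n)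
  | 0 => rfl
  | n + 1 => by rw [run, run_prodStep n]; rfl

lemma image_fst_infOcc_prodStep [Finite Q₁] [Finite Q₂] :
    Prod.fst '' infOcc (prodStep δ₁ δ₂) (a, b) w = infOcc δ₁ a w := by
  simp only [infOcc, image_setOf_frequently, run_prodStep]

lemma image_snd_infOcc_prodStep [Finite Q₁] [Finite Q₂] :
    Prod.snd '' infOcc (prodStep δ₁ δ₂) (a, b) w = infOcc δ₂ b w := by
  simp only [infOcc, image_setOf_frequently, run_prodStep]

lemma IsSCC.exists_upWord_infOcc_eq_image [Finite Q₁] [Finite Q₂] {C : Set (Q₁ × Q₂)}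
    (hC : IsSCC (prodStep δ₁ δ₂) C)
    (hreach : ∀ p ∈ C, Reachable (prodStep δ₁ δ₂) (a, b) p) :
    ∃ (u v : List A) (hv : v ≠ []), infOcc δ₁ a (upWord u v hv) = Prod.fst '' C ∧
      infOcc δ₂ b (upWord u v hv) = Prod.snd '' C := by
  obtain ⟨u, v, hv, hinf⟩ := hC.exists_infOcc_upWord_eq hreach
  exact ⟨u, v, hv, by rw [← hinf, image_fst_infOcc_prodStep],
    by rw [← hinf, image_snd_infOcc_prodStep]⟩

variable [Finite Q₁] [Finite Q₂] (P₁ : Set Q₁ → Prop) (P₂ : Set Q₂ → Prop)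

lemma setOf_infOcc_subset_iff_forall_isSCC :
    {w : ℕ → A | P₁ (infOcc δ₁ a w)} ⊆ {w | P₂ (infOcc δ₂ b w)} ↔
      ∀ C : Set (Q₁ × Q₂), IsSCC (prodStep δ₁ δ₂) C →
        (∀ p ∈ C, Reachable (prodStep δ₁ δ₂) (a, b) p) →
        P₁ (Prod.fst '' C) → P₂ (Prod.snd '' C) := by
  refine ⟨fun hsub C hC hreach hC₁ => ?_, fun hSCC w hw => ?_⟩
  · obtain ⟨u, v, hv, h₁, h₂⟩ := hC.exists_upWord_infOcc_eq_image δ₁ δ₂ a b hreach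
    exact h₂ ▸ hsub (show P₁ _ from h₁ ▸ hC₁)
  · have h := hSCC _ (isSCC_infOcc _ (a, b) w) (fun _ => reachable_of_mem_infOcc _)
      ((image_fst_infOcc_prodStep δ₁ δ₂ a b w).symm ▸ hw)
    rwa [image_snd_infOcc_prodStep] at h

lemma exists_upWord_of_not_setOf_infOcc_subset
    (hnot : ¬ {w : ℕ → A | P₁ (infOcc δ₁ a w)} ⊆ {w | P₂ (infOcc δ₂ b w)}) :
    ∃ (u v : List A) (hv : v ≠ []),
      P₁ (infOcc δ₁ a (upWord u v hv)) ∧ ¬ P₂ (infOcc δ₂ b (upWord u v hv)) := by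
  simp only [setOf_infOcc_subset_iff_forall_isSCC, not_forall] at hnot
  obtain ⟨C, hC, hreach, hC₁, hC₂⟩ := hnot
  obtain ⟨u, v, hv, h₁, h₂⟩ := hC.exists_upWord_infOcc_eq_image δ₁ δ₂ a b hreach
  exact ⟨u, v, hv, h₁ ▸ hC₁, h₂ ▸ hC₂⟩

end Product

theorem stmt12_general {A Q₁ Q₂ : Type*} [Fintype Q₁] [Fintype Q₂]
    (δ₁ : Q₁ → A → Q₁) (q₁ : Q₁) (α₁ : Set (Set Q₁ × Set Q₁))
    (δ₂ : Q₂ → A → Q₂) (q₂ : Q₂) (α₂ : Set (Set Q₂ × Set Q₂)) :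
    ({w : ℕ → A | rabinSat α₁ (infOcc δ₁ q₁ w)} ⊆ {w | rabinSat α₂ (infOcc δ₂ q₂ w)} ↔
      ∀ C : Set (Q₁ × Q₂), IsSCC (prodStep δ₁ δ₂) C →
        (∀ p ∈ C, Reachable (prodStep δ₁ δ₂) (q₁, q₂) p) →
        rabinSat α₁ (Prod.fst '' C) → rabinSat α₂ (Prod.snd '' C)) ∧
    (¬ ({w : ℕ → A | rabinSat α₁ (infOcc δ₁ q₁ w)} ⊆ {w | rabinSat α₂ (infOcc δ₂ q₂ w)}) →
      ∃ (u v : List A) (hv : v ≠ []),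
        rabinSat α₁ (infOcc δ₁ q₁ (upWord u v hv)) ∧
        ¬ rabinSat α₂ (infOcc δ₂ q₂ (upWord u v hv))) :=
  ⟨setOf_infOcc_subset_iff_forall_isSCC δ₁ δ₂ q₁ q₂ _ _,
    exists_upWord_of_not_setOf_infOcc_subset δ₁ δ₂ q₁ q₂ _ _⟩

/-- Inclusion of DRAs holds iff for every reachable SCC `C` of the product, if `π₁ C`
satisfies `α₁` then `π₂ C` satisfies `α₂`; non-inclusion is witnessed by an ultimately
periodic word. -/
theorem stmt12 {A Q₁ Q₂ : Type*} [Fintype A] [Fintype Q₁] [Fintype Q₂]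
    (δ₁ : Q₁ → A → Q₁) (q₁ : Q₁) (α₁ : Set (Set Q₁ × Set Q₁)) (hα₁ : α₁.Finite)
    (δ₂ : Q₂ → A → Q₂) (q₂ : Q₂) (α₂ : Set (Set Q₂ × Set Q₂)) (hα₂ : α₂.Finite) :
    ({w : ℕ → A | rabinSat α₁ (infOcc δ₁ q₁ w)} ⊆ {w | rabinSat α₂ (infOcc δ₂ q₂ w)} ↔
      ∀ C : Set (Q₁ × Q₂), IsSCC (prodStep δ₁ δ₂) C →
        (∀ p ∈ C, Reachable (prodStep δ₁ δ₂) (q₁, q₂) p) →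
        rabinSat α₁ (Prod.fst '' C) → rabinSat α₂ (Prod.snd '' C)) ∧
    (¬ ({w : ℕ → A | rabinSat α₁ (infOcc δ₁ q₁ w)} ⊆ {w | rabinSat α₂ (infOcc δ₂ q₂ w)}) →
      ∃ (u v : List A) (hv : v ≠ []),
        rabinSat α₁ (infOcc δ₁ q₁ (upWord u v hv)) ∧
        ¬ rabinSat α₂ (infOcc δ₂ q₂ (upWord u v hv))) :=
  stmt12_general δ₁ q₁ α₁ δ₂ q₂ α₂
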